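/- Let φ, ψ ∈ Ham(M) and let K, H be Hamiltonians generating them. If the filtered Floer homology groups admit continuation maps σ_{KH} : HF^{(a,b]}(K) → HF^{(a,b]+E⁺(H−K)}(H) and σ_{HK} : HF^{(a,b]}(H) → HF^{(a,b]+E⁺(K−H)}(K) whose composites equal the comparison maps shifting by osc(H−K), then the bipersistence modules HF^{(•,•]}(φ) and HF^{(•,•]}(ψ) are osc(H−K)-interleaved; consequently d_int(HF^{(•,•]}(φ), HF^{(•,•]}(ψ)) ≤ d_Hofer(φ, ψ). -/

import Mathlib

/-- A `P`-indexed persistence module over a field `K`: a functor from the poset `P`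
to the category of `K`-vector spaces. -/
structure PersMod (P : Type*) [Preorder P] (K : Type*) [Field K] where
  V : P → Type*
  acg : ∀ p, AddCommGroup (V p)
  mod : ∀ p, Module K (V p)
  map : ∀ {p q : P}, p ≤ q → (V p →ₗ[K] V q)
  map_id : ∀ p : P, map (le_refl p) = LinearMap.id
  map_comp : ∀ {p q r : P} (hpq : p ≤ q) (hqr : q ≤ r),
    map (hpq.trans hqr) = (map hqr).comp (map hpq)

attribute [instance] PersMod.acg PersMod.mod

open Classical in
/-- The interval module `F_I` of a convex set `I` in a poset `P`: it assigns `K` to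
points of `I` and `0` elsewhere, with identity maps inside `I` and zero maps
otherwise. -/
noncomputable def intervalModule (K : Type*) [Field K] {P : Type*} [Preorder P]
    (I : Set P)
    (hconv : ∀ ⦃x y z : P⦄, x ∈ I → y ∈ I → x ≤ z → z ≤ y → z ∈ I) :
    PersMod P K where
  V p := ↥(if p ∈ I then (⊤ : Submodule K K) else ⊥)
  acg p := inferInstance
  mod p := inferInstance
  map {p q} _ :=
    { toFun := fun x => ⟨if p ∈ I ∧ q ∈ I then (x : K) else 0, by
        by_cases hq : q ∈ I
        · simp [hq]
        · have : ¬ (p ∈ I ∧ q ∈ I) := fun h => hq h.2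
          rw [if_neg this, if_neg hq]
          exact Submodule.zero_mem _⟩
      map_add' := by
        intro x y
        apply Subtype.ext
        by_cases h' : p ∈ I ∧ q ∈ I <;> simp [h']
      map_smul' := by
        intro c x
        apply Subtype.ext
        by_cases h' : p ∈ I ∧ q ∈ I <;> simp [h'] }
  map_id := by
    intro p
    apply LinearMap.ext
    intro x
    apply Subtype.ext
    by_cases hp : p ∈ I
    · simp [hp]
    · have hx : (x : K) = 0 := by
        have key : ∀ y : K, y ∈ (if p ∈ I then (⊤ : Submodule K K) else ⊥) → y = 0 := by
          intro y hy
          rw [if_neg hp] at hy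
          exact (Submodule.mem_bot K).1 hy
        exact key _ x.2
      show (if p ∈ I ∧ p ∈ I then (x : K) else 0) = (x : K)
      rw [if_neg (fun h => hp h.1), hx]
  map_comp := by
    intro p q r hpq hqr
    apply LinearMap.ext
    intro x
    apply Subtype.ext
    by_cases hp : p ∈ I
    · by_cases hr : r ∈ I
      · have hq : q ∈ I := hconv hp hr hpq hqr
        simp [hp, hq, hr]
      · have : ¬ (p ∈ I ∧ r ∈ I) := fun h => hr h.2
        simp [hr, this]
    · have hx : (x : K) = 0 := by
        have key : ∀ y : K, y ∈ (if p ∈ I then (⊤ : Submodule K K) else ⊥) → y = 0 := by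
          intro y hy
          rw [if_neg hp] at hy
          exact (Submodule.mem_bot K).1 hy
        exact key _ x.2
      have h1 : ¬ (p ∈ I ∧ r ∈ I) := fun h => hp h.1
      have h2 : ¬ (p ∈ I ∧ q ∈ I) := fun h => hp h.1
      simp [h1, h2, hx]

/-- Direct sum (pointwise) of two persistence modules. -/
noncomputable def sumPers {P : Type*} [Preorder P] {K : Type*} [Field K]
    (M N : PersMod P K) : PersMod P K where
  V p := M.V p × N.V p
  acg p := inferInstance
  mod p := inferInstance
  map h := (M.map h).prodMap (N.map h)
  map_id := by
    intro p
    refine LinearMap.ext fun x => ?_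
    show ((M.map (le_refl p)).prodMap (N.map (le_refl p))) x = x
    rw [M.map_id, N.map_id]
    rfl
  map_comp := by
    intro p q r hpq hqr
    refine LinearMap.ext fun x => ?_
    show ((M.map (hpq.trans hqr)).prodMap (N.map (hpq.trans hqr))) x
        = ((M.map hqr).prodMap (N.map hqr)) (((M.map hpq).prodMap (N.map hpq)) x)
    rw [M.map_comp hpq hqr, N.map_comp hpq hqr]
    rfl

/-- An isomorphism of persistence modules: a pointwise linear equivalence commuting
with the structure maps. -/
structure PersModIso {P : Type*} [Preorder P] {K : Type*} [Field K]
    (M N : PersMod P K) where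
  e : ∀ p : P, M.V p ≃ₗ[K] N.V p
  comm : ∀ {p q : P} (h : p ≤ q) (x : M.V p), e q (M.map h x) = N.map h (e p x)

/-- Morphism data interleaving two `ℝ²`-indexed (bi)persistence modules with shifts
`δ'` and `δ''`: `F : M → N[δ'⃗]`, `G : N → M[δ''⃗]`, natural, whose composites equal
the comparison (shift) morphisms.  (For filtered Floer homology, `F` and `G` are the
continuation maps `σ_{KH}`, `σ_{HK}` with `δ' = E⁺(H−K)`, `δ'' = E⁺(K−H)`.) -/
structure Interleave2 {K : Type*} [Field K] (M N : PersMod (ℝ × ℝ) K)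
    (δ' δ'' : ℝ) (h' : 0 ≤ δ') (h'' : 0 ≤ δ'') where
  F : ∀ x : ℝ × ℝ, M.V x →ₗ[K] N.V (x + (δ', δ'))
  G : ∀ x : ℝ × ℝ, N.V x →ₗ[K] M.V (x + (δ'', δ''))
  natF : ∀ (x y : ℝ × ℝ) (h : x ≤ y) (v : M.V x),
    F y (M.map h v)
      = N.map (⟨add_le_add h.1 le_rfl, add_le_add h.2 le_rfl⟩ :
          x + (δ', δ') ≤ y + (δ', δ')) (F x v)
  natG : ∀ (x y : ℝ × ℝ) (h : x ≤ y) (v : N.V x),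
    G y (N.map h v)
      = M.map (⟨add_le_add h.1 le_rfl, add_le_add h.2 le_rfl⟩ :
          x + (δ'', δ'') ≤ y + (δ'', δ'')) (G x v)
  GF : ∀ (x : ℝ × ℝ) (v : M.V x),
    G (x + (δ', δ')) (F x v)
      = M.map (show x ≤ x + (δ', δ') + (δ'', δ'') by
          constructor <;> simp <;> linarith) v
  FG : ∀ (x : ℝ × ℝ) (v : N.V x),
    F (x + (δ'', δ'')) (G x v)
      = N.map (show x ≤ x + (δ'', δ'') + (δ', δ') by
          constructor <;> simp <;> linarith) v

/-- Two `ℝ²`-indexed persistence modules are `δ`-interleaved. -/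
def Interleaved {K : Type*} [Field K] (M N : PersMod (ℝ × ℝ) K) (δ : ℝ) : Prop :=
  ∃ h : 0 ≤ δ, Nonempty (Interleave2 M N δ δ h h)

lemma PersMod.map_map {P : Type*} [Preorder P] {K : Type*} [Field K]
    (M : PersMod P K) {p q r : P} (hpq : p ≤ q) (hqr : q ≤ r) (v : M.V p) :
    M.map hqr (M.map hpq v) = M.map (hpq.trans hqr) v := by
  rw [M.map_comp hpq hqr]; rfl

noncomputable def Interleave2.weaken {K : Type*} [Field K] {M N : PersMod (ℝ × ℝ) K}
    {δ' δ'' s : ℝ} {h' : 0 ≤ δ'} {h'' : 0 ≤ δ''}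
    (I : Interleave2 M N δ' δ'' h' h'') (hs : 0 ≤ s) (h1 : δ' ≤ s) (h2 : δ'' ≤ s) :
    Interleave2 M N s s hs hs where
  F x := (N.map (⟨add_le_add_right h1 _, add_le_add_right h1 _⟩ :
      x + (δ', δ') ≤ x + (s, s))).comp (I.F x)
  G x := (M.map (⟨add_le_add_right h2 _, add_le_add_right h2 _⟩ :
      x + (δ'', δ'') ≤ x + (s, s))).comp (I.G x)
  natF := by
    intro x y h v
    simp only [LinearMap.comp_apply]
    rw [I.natF x y h v, N.map_map, N.map_map]
  natG := by
    intro x y h v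
    simp only [LinearMap.comp_apply]
    rw [I.natG x y h v, M.map_map, M.map_map]
  GF := by
    intro x v
    simp only [LinearMap.comp_apply]
    rw [I.natG _ _ (⟨add_le_add_right h1 _, add_le_add_right h1 _⟩ :
        x + (δ', δ') ≤ x + (s, s)) (I.F x v), I.GF, M.map_map, M.map_map]
  FG := by
    intro x v
    simp only [LinearMap.comp_apply]
    rw [I.natF _ _ (⟨add_le_add_right h2 _, add_le_add_right h2 _⟩ :
        x + (δ'', δ'') ≤ x + (s, s)) (I.G x v), I.FG, N.map_map, N.map_map]

/-- Abstract form of the dynamical stability theorem: if, for each value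
`s = osc(H − K)` arising from Hamiltonians `K`, `H` generating `φ`, `ψ`, the filtered
Floer bipersistence modules `M = HF^{(•,•]}(φ)`, `N = HF^{(•,•]}(ψ)` are connected by
continuation maps shifting by `δ'`, `δ''` with `δ' + δ'' = s` whose composites are the
comparison maps, then `M` and `N` are `s`-interleaved for every such `s`; consequently
`d_int(M, N) ≤ inf S = d_Hofer(φ, ψ)`. -/
theorem interleaving_of_continuation {K : Type*} [Field K]
    (M N : PersMod (ℝ × ℝ) K) (S : Set ℝ) (hS : S.Nonempty)
    (hcont : ∀ s ∈ S, ∃ (δ' δ'' : ℝ) (h' : 0 ≤ δ') (h'' : 0 ≤ δ''),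
      δ' + δ'' = s ∧ Nonempty (Interleave2 M N δ' δ'' h' h'')) :
    (∀ s ∈ S, Interleaved M N s) ∧
      sInf {δ : ℝ | Interleaved M N δ} ≤ sInf S := by
  have key : ∀ s ∈ S, Interleaved M N s := by
    intro s hsS
    obtain ⟨δ', δ'', h', h'', hsum, ⟨I⟩⟩ := hcont s hsS
    have hs : 0 ≤ s := hsum ▸ add_nonneg h' h''
    exact ⟨hs, ⟨I.weaken hs (by linarith) (by linarith)⟩⟩
  refine ⟨key, csInf_le_csInf ⟨0, fun δ hδ => hδ.1⟩ hS fun s hsS => key s hsS⟩
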